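/- arXiv:1812.09002 — 2 statements merged into one kernel-verified Lean document; each statement's English description precedes it below -/
import Mathlib

section
/- Let (T=(V,E);t,σ) be an event-labeled gene tree, let S=(W,F) be a species tree, and let μ: V → W∪F be a map. Then μ is a relaxed tree reconciliation map from (T;t,σ) to S if and only if μ is a TreeNet-reconciliation map from (T;t,σ) to S. -/
namespace Phylo

/-- A directed multigraph: `tail e` and `head e` give the endpoints of an arc `e`.
    Multi-arcs are allowed since distinct arcs may have the same endpoints. -/
structure MGraph (V : Type) (E : Type) where
  tail : E → V
  head : E → V

namespace MGraph

variable {V E : Type}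

/-- `G.Adj u v` iff there is an arc from `u` to `v`. -/
def Adj (G : MGraph V E) (u v : V) : Prop :=
  ∃ e : E, G.tail e = u ∧ G.head e = v

/-- `G.Reach u v` iff there is a directed path (possibly a single vertex) from `u` to `v`. -/
def Reach (G : MGraph V E) (u v : V) : Prop :=
  Relation.ReflTransGen G.Adj u v

/-- `G.vle v u` means `v ⪯ u` (i.e. `v` is a descendant of `u`). -/
def vle (G : MGraph V E) (v u : V) : Prop := G.Reach u v

/-- `G.vlt v u` means `v ≺ u` (i.e. `v` is strictly below `u`). -/
def vlt (G : MGraph V E) (v u : V) : Prop := G.Reach u v ∧ v ≠ u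

/-- indegree of a vertex -/
noncomputable def inDeg (G : MGraph V E) (v : V) : ℕ :=
  Nat.card {e : E // G.head e = v}

/-- outdegree of a vertex -/
noncomputable def outDeg (G : MGraph V E) (v : V) : ℕ :=
  Nat.card {e : E // G.tail e = v}

/-- `G` is a DAG. -/
def Acyclic (G : MGraph V E) : Prop :=
  ∀ v : V, ¬ Relation.TransGen G.Adj v v

/-- `G` has no multi-arcs. -/
def MultiArcFree (G : MGraph V E) : Prop :=
  ∀ e f : E, G.tail e = G.tail f → G.head e = G.head f → e = f

/-- A point of `V ∪ E`, where an arc is represented by its head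
    (used for extending `Q`-sets to arcs). -/
def hpt (G : MGraph V E) : V ⊕ E → V
  | Sum.inl v => v
  | Sum.inr e => G.head e

/-- A point of `V ∪ E`, where an arc is represented by its tail
    (used for extending `lca` to arcs). -/
def tpt (G : MGraph V E) : V ⊕ E → V
  | Sum.inl v => v
  | Sum.inr e => G.tail e

/-- The strict order `≺` on `V ∪ E`:
    `x ≺ y` for vertices means `x ⪯ y` and `x ≠ y`;
    a vertex `x ≺` an arc `e = (u,v)` iff `x ⪯ v`;
    an arc `e = (u,v) ≺` a vertex `x` iff `u ⪯ x`;
    for arcs `e = (u,v)` and `f = (a,b)`: `e ≺ f` iff `v ≺ u ⪯ b ≺ a`. -/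
def slt (G : MGraph V E) : V ⊕ E → V ⊕ E → Prop
  | Sum.inl x, Sum.inl y => G.vlt x y
  | Sum.inl x, Sum.inr e => G.vle x (G.head e)
  | Sum.inr e, Sum.inl x => G.vle (G.tail e) x
  | Sum.inr e, Sum.inr f =>
      G.vlt (G.head e) (G.tail e) ∧ G.vle (G.tail e) (G.head f) ∧
        G.vlt (G.head f) (G.tail f)

/-- The (non-strict) order `⪯` on `V ∪ E`. -/
def sle (G : MGraph V E) (a b : V ⊕ E) : Prop := a = b ∨ G.slt a b

/-- `Q_N(x,y)`: the set of vertices `z` admitting directed paths from `z` to `x`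
    and from `z` to `y` which are separated by `z`, i.e. start with different
    children of `z`. -/
def QSet (G : MGraph V E) (x y : V) : Set V :=
  {z | ∃ c₁ c₂ : V, c₁ ≠ c₂ ∧ G.Adj z c₁ ∧ G.Adj z c₂ ∧ G.Reach c₁ x ∧ G.Reach c₂ y}

/-- `l` is the least common ancestor of the set `A`:
    a `⪯`-minimal common ancestor of all of `A`. -/
def IsLca (G : MGraph V E) (A : Set V) (l : V) : Prop :=
  (∀ a ∈ A, G.Reach l a) ∧ ∀ l' : V, (∀ a ∈ A, G.Reach l' a) → G.Reach l' l

/-- A directed path, given as its (nonempty, repetition-free) list of vertices. -/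
def IsDiPath (G : MGraph V E) (p : List V) : Prop :=
  p ≠ [] ∧ p.Chain' G.Adj ∧ p.Nodup

end MGraph

/-- Event labels for inner vertices of gene trees: speciation or duplication. -/
inductive Event : Type
  | spec : Event
  | dupl : Event
  deriving DecidableEq

variable {V E W F D U S : Type}

/-- `(G, lv, ρ)` is a (rooted phylogenetic) network with leaf set `lv` and root `ρ`:
    (N1) the root has indegree 0 and outdegree 1 and its unique child has
    indegree 1 and outdegree at least 2;
    (N2) the leaves are exactly the vertices of outdegree 0 and indegree 1;
    (N3) every other non-leaf vertex is a tree vertex (indegree 1, outdegree > 1)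
    or a hybrid vertex (indegree > 1, outdegree 1);
    moreover the leaf set has at least two elements and everything is finite. -/
structure IsNetwork (G : MGraph V E) (lv : Set V) (ρ : V) : Prop where
  finV : Finite V
  finE : Finite E
  acyclic : G.Acyclic
  root_in : G.inDeg ρ = 0
  root_out : G.outDeg ρ = 1
  root_child : ∀ c : V, G.Adj ρ c → G.inDeg c = 1 ∧ 2 ≤ G.outDeg c
  leaf_iff : ∀ v : V, v ∈ lv ↔ (G.outDeg v = 0 ∧ G.inDeg v = 1)
  inner_deg : ∀ v : V, v ∉ lv → v ≠ ρ →
      (G.inDeg v = 1 ∧ 2 ≤ G.outDeg v) ∨ (2 ≤ G.inDeg v ∧ G.outDeg v = 1)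
  two_leaves : ∃ a b : V, a ∈ lv ∧ b ∈ lv ∧ a ≠ b

/-- no hybrid vertices -/
def NoHybrid (G : MGraph V E) : Prop := ∀ v : V, G.inDeg v ≤ 1

/-- A (rooted) phylogenetic tree: a multi-arc free network without hybrid vertices. -/
def IsPhyloTree (G : MGraph V E) (lv : Set V) (ρ : V) : Prop :=
  IsNetwork G lv ρ ∧ G.MultiArcFree ∧ NoHybrid G

/-- A network (or tree) "on 𝕊": its leaves are in bijection with the species set `S`
    via the labeling `sp`. -/
structure IsLeafLabeling (G : MGraph V E) (lv : Set V) (sp : S → V) : Prop where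
  inj : Function.Injective sp
  mem : ∀ s : S, sp s ∈ lv
  surj : ∀ v ∈ lv, ∃ s : S, sp s = v

/-- `(G, lv, ρ, σ)` is the underlying structure of an event-labeled gene tree on the
    gene set `lv`: a reduced tree (root of indegree 0 and outdegree ≥ 2, all other
    inner vertices of indegree 1 and outdegree ≥ 2) together with a surjective
    gene-species map `σ` whose image has more than one element. -/
structure IsGeneTree (G : MGraph V E) (lv : Set V) (ρ : V) (σ : V → S) : Prop where
  finV : Finite V
  finE : Finite E
  acyclic : G.Acyclic
  multiarc_free : G.MultiArcFree
  root_in : G.inDeg ρ = 0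
  root_out : 2 ≤ G.outDeg ρ
  leaf_iff : ∀ v : V, v ∈ lv ↔ (G.outDeg v = 0 ∧ G.inDeg v = 1)
  inner_deg : ∀ v : V, v ∉ lv → v ≠ ρ → G.inDeg v = 1 ∧ 2 ≤ G.outDeg v
  sigma_surj : ∀ s : S, ∃ g ∈ lv, σ g = s
  sigma_nontriv : ∃ g g' : V, g ∈ lv ∧ g' ∈ lv ∧ σ g ≠ σ g'

/-- `L_T(x)`: the set of leaves below or equal to `x`. -/
def leavesBelow (G : MGraph V E) (lv : Set V) (x : V) : Set V :=
  {g | g ∈ lv ∧ G.Reach x g}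

/-- A TreeNet-reconciliation map `μ` from the event-labeled gene tree `(T;t,σ)`
    to the network `N` (with species labeling `sp`):
    (R1) leaves are mapped to the species containing them;
    (R2.i) a speciation vertex is mapped to a vertex of `N` separating the images
    of two of its children (i.e. `μ x ∈ Q²`);
    (R2.ii) a duplication vertex is mapped to an arc of `N`;
    (R3) ancestor relations are preserved (strictly, unless both events are
    duplications). -/
structure IsTreeNetRecon (T : MGraph V E) (lvT : Set V) (t : V → Event) (σ : V → S)
    (N : MGraph W F) (sp : S → W) (μ : V → W ⊕ F) : Prop where
  R1 : ∀ x ∈ lvT, μ x = Sum.inl (sp (σ x))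
  R2i : ∀ x : V, x ∉ lvT → t x = Event.spec →
      ∃ w : W, μ x = Sum.inl w ∧ ∃ c₁ c₂ : V, T.Adj x c₁ ∧ T.Adj x c₂ ∧
        w ∈ N.QSet (N.hpt (μ c₁)) (N.hpt (μ c₂))
  R2ii : ∀ x : V, x ∉ lvT → t x = Event.dupl → ∃ e : F, μ x = Sum.inr e
  R3d : ∀ x y : V, T.vlt x y → x ∉ lvT → y ∉ lvT →
      t x = Event.dupl → t y = Event.dupl → N.sle (μ x) (μ y)
  R3s : ∀ x y : V, T.vlt x y →
      ¬ (x ∉ lvT ∧ y ∉ lvT ∧ t x = Event.dupl ∧ t y = Event.dupl) →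
      N.slt (μ x) (μ y)

/-- A relaxed tree reconciliation map from `(T;t,σ)` to the species tree `S`:
    like a tree reconciliation map but (R2.iii) is not required.
    (R2.i*) requires a speciation vertex to be mapped to
    `lca_S(σ(L_T(x)))`. -/
structure IsRelaxedRecon (T : MGraph V E) (lvT : Set V) (t : V → Event) (σ : V → S)
    (N : MGraph W F) (sp : S → W) (μ : V → W ⊕ F) : Prop where
  R1 : ∀ x ∈ lvT, μ x = Sum.inl (sp (σ x))
  R2istar : ∀ x : V, x ∉ lvT → t x = Event.spec →
      ∃ w : W, μ x = Sum.inl w ∧ N.IsLca (sp '' (σ '' leavesBelow T lvT x)) w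
  R2ii : ∀ x : V, x ∉ lvT → t x = Event.dupl → ∃ e : F, μ x = Sum.inr e
  R3d : ∀ x y : V, T.vlt x y → x ∉ lvT → y ∉ lvT →
      t x = Event.dupl → t y = Event.dupl → N.sle (μ x) (μ y)
  R3s : ∀ x y : V, T.vlt x y →
      ¬ (x ∉ lvT ∧ y ∉ lvT ∧ t x = Event.dupl ∧ t y = Event.dupl) →
      N.slt (μ x) (μ y)

/-!
Both (R2.i*) and (R2.i) only constrain the image `w` of a speciation vertex `x`, and by (R3) every
child of `x` and every leaf below `x` is mapped strictly below `w`. In a tree, a vertex `w` lying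
strictly above every element of the species set `A = σ(L_T(x))` is `lca_S(A)` exactly when two
elements of `A` sit below distinct children of `w`. Following each child of `x` down to a leaf of
`T` turns this into the condition that `w` separates the images of two children of `x`, which is
`w ∈ Q²_S`.
-/

namespace MGraph

variable {G : MGraph V E} {A : Set V} {a u v w x y x' y' : V}

theorem Acyclic.ne_of_adj (hac : G.Acyclic) (h : G.Adj u v) : u ≠ v := by
  rintro rfl
  exact hac u (.single h)

theorem Acyclic.wellFounded [Finite V] (hac : G.Acyclic) : WellFounded (flip G.Adj) := by
  have : IsTrans V (flip (Relation.TransGen G.Adj)) := ⟨fun _ _ _ h₁ h₂ => h₂.trans h₁⟩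
  have : Std.Irrefl (flip (Relation.TransGen G.Adj)) := ⟨hac⟩
  exact Subrelation.wf (r := flip (Relation.TransGen G.Adj)) (fun h => .single h)
    (Finite.wellFounded_of_trans_of_irrefl _)

theorem exists_adj_reach_of_vlt (h : G.vlt v u) : ∃ c, G.Adj u c ∧ G.Reach c v := by
  rcases h.1.cases_head with rfl | hc
  · exact absurd rfl h.2
  · exact hc

theorem Acyclic.vlt_hpt_of_slt_inl {m : V ⊕ E} (hac : G.Acyclic) (h : G.slt m (.inl w)) :
    G.vlt (G.hpt m) w := by
  cases m with
  | inl v => exact h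
  | inr e =>
    have hwt : G.Reach w (G.tail e) := h
    have hadj : G.Adj (G.tail e) (G.head e) := ⟨e, rfl, rfl⟩
    refine ⟨hwt.tail hadj, fun heq => hac w ?_⟩
    rw [← heq] at hwt ⊢
    exact .tail' hwt hadj

theorem reach_hpt_of_inl_slt {m : V ⊕ E} (h : G.slt (.inl a) m) : G.Reach (G.hpt m) a := by
  cases m with
  | inl v => exact h.1
  | inr e => exact h

theorem mem_QSet_of_reach (hw : w ∈ G.QSet x y) (hx : G.Reach x x') (hy : G.Reach y y') :
    w ∈ G.QSet x' y' := by
  obtain ⟨c₁, c₂, hne, h₁, h₂, hc₁, hc₂⟩ := hw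
  exact ⟨c₁, c₂, hne, h₁, h₂, hc₁.trans hx, hc₂.trans hy⟩

/-- The lca of `A` has a child that misses some element of `A`, since otherwise that child would be
a common ancestor of `A` strictly below the lca. -/
theorem Acyclic.exists_mem_QSet_of_isLca (hac : G.Acyclic) (hl : G.IsLca A w)
    (hA : ∀ a ∈ A, G.vlt a w) (hne : A.Nonempty) : ∃ a₁ ∈ A, ∃ a₂ ∈ A, w ∈ G.QSet a₁ a₂ := by
  obtain ⟨a₁, ha₁⟩ := hne
  obtain ⟨d₁, hwd₁, hd₁⟩ := exists_adj_reach_of_vlt (hA a₁ ha₁)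
  have hmiss : ¬ ∀ a ∈ A, G.Reach d₁ a := fun hall => hac w (.head' hwd₁ (hl.2 d₁ hall))
  push Not at hmiss
  obtain ⟨a₂, ha₂, hd₁a₂⟩ := hmiss
  obtain ⟨d₂, hwd₂, hd₂⟩ := exists_adj_reach_of_vlt (hA a₂ ha₂)
  have hne : d₁ ≠ d₂ := by
    rintro rfl
    exact hd₁a₂ hd₂
  exact ⟨a₁, ha₁, a₂, ha₂, d₁, d₂, hne, hwd₁, hwd₂, hd₁, hd₂⟩

end MGraph

namespace NoHybrid

open MGraph

variable [Finite E] {G : MGraph V E} {A : Set V} {a a₁ a₂ d d' p q u u' v v₁ v₂ w : V}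

theorem eq_of_adj (hh : NoHybrid G) (h : G.Adj u v) (h' : G.Adj u' v) : u = u' := by
  obtain ⟨e, rfl, rfl⟩ := h
  obtain ⟨f, rfl, hf⟩ := h'
  have : Subsingleton {e' : E // G.head e' = G.head e} :=
    Finite.card_le_one_iff_subsingleton.mp (hh _)
  rw [Subtype.mk_eq_mk.mp (Subsingleton.elim (⟨e, rfl⟩ : {e' // G.head e' = G.head e}) ⟨f, hf⟩)]

theorem reach_total (hh : NoHybrid G) (hp : G.Reach p a) (hq : G.Reach q a) :
    G.Reach p q ∨ G.Reach q p := by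
  induction hp using Relation.ReflTransGen.head_induction_on with
  | refl => exact .inr hq
  | head hadj _ ih =>
    rcases ih with h | h
    · exact .inl (.head hadj h)
    · rcases h.cases_tail with rfl | ⟨u, hqu, hu⟩
      · exact .inl (.single hadj)
      · exact .inr (hh.eq_of_adj hadj hu ▸ hqu)

theorem eq_of_adj_of_reach_of_adj (hh : NoHybrid G) (hac : G.Acyclic) (hd : G.Adj w d)
    (hd' : G.Adj w d') (h : G.Reach d d') : d = d' := by
  rcases h.cases_tail with rfl | ⟨u, hdu, hu⟩
  · rfl
  · exact absurd (.head' hd (hh.eq_of_adj hd' hu ▸ hdu)) (hac w)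

theorem eq_of_adj_of_reach (hh : NoHybrid G) (hac : G.Acyclic) (hd : G.Adj w d)
    (hd' : G.Adj w d') (ha : G.Reach d a) (ha' : G.Reach d' a) : d = d' := by
  rcases hh.reach_total ha ha' with h | h
  · exact hh.eq_of_adj_of_reach_of_adj hac hd hd' h
  · exact (hh.eq_of_adj_of_reach_of_adj hac hd' hd h).symm

theorem reach_of_adj_of_vlt (hh : NoHybrid G) (hac : G.Acyclic) (hd : G.Adj w d)
    (hv : G.vlt v w) (hda : G.Reach d a) (hva : G.Reach v a) : G.Reach d v := by
  obtain ⟨d', hd', hd'v⟩ := exists_adj_reach_of_vlt hv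
  rwa [hh.eq_of_adj_of_reach hac hd hd' hda (hd'v.trans hva)]

theorem mem_QSet_of_vlt (hh : NoHybrid G) (hac : G.Acyclic) (hw : w ∈ G.QSet a₁ a₂)
    (h₁ : G.vlt v₁ w) (h₂ : G.vlt v₂ w) (hv₁ : G.Reach v₁ a₁) (hv₂ : G.Reach v₂ a₂) :
    w ∈ G.QSet v₁ v₂ := by
  obtain ⟨c₁, c₂, hne, hc₁, hc₂, hca₁, hca₂⟩ := hw
  exact ⟨c₁, c₂, hne, hc₁, hc₂, hh.reach_of_adj_of_vlt hac hc₁ h₁ hca₁ hv₁,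
    hh.reach_of_adj_of_vlt hac hc₂ h₂ hca₂ hv₂⟩

/-- A common ancestor `l` of `A` that is comparable with `w` but strictly below it would lie below
both children of `w` separating `a₁` and `a₂`, which is impossible in a tree. -/
theorem isLca_of_mem_QSet (hh : NoHybrid G) (hac : G.Acyclic) (hup : ∀ a ∈ A, G.Reach w a)
    (ha₁ : a₁ ∈ A) (ha₂ : a₂ ∈ A) (hw : w ∈ G.QSet a₁ a₂) : G.IsLca A w := by
  refine ⟨hup, fun l hl => ?_⟩
  rcases hh.reach_total (hl a₁ ha₁) (hup a₁ ha₁) with hlw | hwl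
  · exact hlw
  by_cases hlw : l = w
  · exact hlw ▸ .refl
  obtain ⟨c₁, c₂, hne, hc₁, hc₂, hca₁, hca₂⟩ := hw
  have hc₁l := hh.reach_of_adj_of_vlt hac hc₁ ⟨hwl, hlw⟩ hca₁ (hl a₁ ha₁)
  have hc₂l := hh.reach_of_adj_of_vlt hac hc₂ ⟨hwl, hlw⟩ hca₂ (hl a₂ ha₂)
  exact absurd (hh.eq_of_adj_of_reach hac hc₁ hc₂ hc₁l hc₂l) hne

end NoHybrid

namespace IsGeneTree

variable {T : MGraph V E} {lvT : Set V} {ρT : V} {σ : V → S}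

theorem exists_adj_of_notMem (hT : IsGeneTree T lvT ρT σ) {x : V} (hx : x ∉ lvT) :
    ∃ c, T.Adj x c := by
  have hout : T.outDeg x ≠ 0 := by
    by_cases hρ : x = ρT
    · rw [hρ]
      have := hT.root_out
      omega
    · have := (hT.inner_deg x hx hρ).2
      omega
  obtain ⟨⟨e, he⟩, -⟩ := Nat.card_ne_zero.mp hout
  exact ⟨T.head e, e, he, rfl⟩

theorem exists_leaf_reach (hT : IsGeneTree T lvT ρT σ) (x : V) : ∃ g ∈ lvT, T.Reach x g := by
  have := hT.finV
  induction x using hT.acyclic.wellFounded.induction with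
  | _ x ih =>
    by_cases hx : x ∈ lvT
    · exact ⟨x, hx, .refl⟩
    obtain ⟨c, hc⟩ := hT.exists_adj_of_notMem hx
    obtain ⟨g, hg, hcg⟩ := ih c hc
    exact ⟨g, hg, .head hc hcg⟩

end IsGeneTree

section Reconciliation

open MGraph

variable {T : MGraph V E} {lvT : Set V} {ρT : V} {t : V → Event} {σ : V → S}
  {N : MGraph W F} {sp : S → W} {μ : V → W ⊕ F} {c g x y : V} {w : W}

theorem reach_hpt_of_reach_leaf (hR1 : ∀ x ∈ lvT, μ x = .inl (sp (σ x)))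
    (hR3 : ∀ x y : V, T.vlt x y →
      ¬ (x ∉ lvT ∧ y ∉ lvT ∧ t x = Event.dupl ∧ t y = Event.dupl) → N.slt (μ x) (μ y))
    (hg : g ∈ lvT) (hcg : T.Reach c g) : N.Reach (N.hpt (μ c)) (sp (σ g)) := by
  by_cases hgc : g = c
  · subst hgc
    rw [hR1 g hg]
    exact .refl
  · have := hR3 g c ⟨hcg, hgc⟩ fun h => h.1 hg
    rw [hR1 g hg] at this
    exact reach_hpt_of_inl_slt this

theorem vlt_hpt_of_vlt_spec (hac : N.Acyclic)
    (hR3 : ∀ x y : V, T.vlt x y →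
      ¬ (x ∉ lvT ∧ y ∉ lvT ∧ t x = Event.dupl ∧ t y = Event.dupl) → N.slt (μ x) (μ y))
    (hs : t x = Event.spec) (hw : μ x = .inl w) (hyx : T.vlt y x) : N.vlt (N.hpt (μ y)) w := by
  have := hR3 y x hyx fun h => Event.noConfusion (hs.symm.trans h.2.2.2)
  rw [hw] at this
  exact hac.vlt_hpt_of_slt_inl this

theorem vlt_of_mem_image_leavesBelow (hac : N.Acyclic) (hR1 : ∀ x ∈ lvT, μ x = .inl (sp (σ x)))
    (hR3 : ∀ x y : V, T.vlt x y →
      ¬ (x ∉ lvT ∧ y ∉ lvT ∧ t x = Event.dupl ∧ t y = Event.dupl) → N.slt (μ x) (μ y))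
    (hx : x ∉ lvT) (hs : t x = Event.spec) (hw : μ x = .inl w) :
    ∀ a ∈ sp '' (σ '' leavesBelow T lvT x), N.vlt a w := by
  rintro _ ⟨_, ⟨g, ⟨hg, hxg⟩, rfl⟩, rfl⟩
  have hgx : T.vlt g x := ⟨hxg, fun h => hx (h ▸ hg)⟩
  simpa only [hR1 g hg, hpt] using vlt_hpt_of_vlt_spec hac hR3 hs hw hgx

theorem exists_adj_mem_QSet_of_isLca [Finite F] (hT : IsGeneTree T lvT ρT σ) (hac : N.Acyclic)
    (hh : NoHybrid N) (hR1 : ∀ x ∈ lvT, μ x = .inl (sp (σ x)))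
    (hR3 : ∀ x y : V, T.vlt x y →
      ¬ (x ∉ lvT ∧ y ∉ lvT ∧ t x = Event.dupl ∧ t y = Event.dupl) → N.slt (μ x) (μ y))
    (hx : x ∉ lvT) (hs : t x = Event.spec) (hw : μ x = .inl w)
    (hl : N.IsLca (sp '' (σ '' leavesBelow T lvT x)) w) :
    ∃ c₁ c₂ : V, T.Adj x c₁ ∧ T.Adj x c₂ ∧ w ∈ N.QSet (N.hpt (μ c₁)) (N.hpt (μ c₂)) := by
  have hA := vlt_of_mem_image_leavesBelow hac hR1 hR3 hx hs hw
  have hchild : ∀ a ∈ sp '' (σ '' leavesBelow T lvT x),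
      ∃ c, T.Adj x c ∧ N.vlt (N.hpt (μ c)) w ∧ N.Reach (N.hpt (μ c)) a := by
    rintro _ ⟨_, ⟨g, ⟨hg, hxg⟩, rfl⟩, rfl⟩
    obtain ⟨c, hxc, hcg⟩ := exists_adj_reach_of_vlt ⟨hxg, fun h => hx (h ▸ hg)⟩
    have hcx : T.vlt c x := ⟨.single hxc, (hT.acyclic.ne_of_adj hxc).symm⟩
    exact ⟨c, hxc, vlt_hpt_of_vlt_spec hac hR3 hs hw hcx, reach_hpt_of_reach_leaf hR1 hR3 hg hcg⟩
  obtain ⟨g, hg, hxg⟩ := hT.exists_leaf_reach x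
  obtain ⟨a₁, ha₁, a₂, ha₂, hQ⟩ :=
    hac.exists_mem_QSet_of_isLca hl hA ⟨sp (σ g), σ g, ⟨g, ⟨hg, hxg⟩, rfl⟩, rfl⟩
  obtain ⟨c₁, hxc₁, hc₁w, hc₁a⟩ := hchild a₁ ha₁
  obtain ⟨c₂, hxc₂, hc₂w, hc₂a⟩ := hchild a₂ ha₂
  exact ⟨c₁, c₂, hxc₁, hxc₂, hh.mem_QSet_of_vlt hac hQ hc₁w hc₂w hc₁a hc₂a⟩

theorem isLca_of_adj_mem_QSet [Finite F] (hT : IsGeneTree T lvT ρT σ) (hac : N.Acyclic)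
    (hh : NoHybrid N) (hR1 : ∀ x ∈ lvT, μ x = .inl (sp (σ x)))
    (hR3 : ∀ x y : V, T.vlt x y →
      ¬ (x ∉ lvT ∧ y ∉ lvT ∧ t x = Event.dupl ∧ t y = Event.dupl) → N.slt (μ x) (μ y))
    (hx : x ∉ lvT) (hs : t x = Event.spec) (hw : μ x = .inl w) {c₁ c₂ : V}
    (hxc₁ : T.Adj x c₁) (hxc₂ : T.Adj x c₂) (hQ : w ∈ N.QSet (N.hpt (μ c₁)) (N.hpt (μ c₂))) :
    N.IsLca (sp '' (σ '' leavesBelow T lvT x)) w := by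
  have hleaf : ∀ c, T.Adj x c →
      ∃ a ∈ sp '' (σ '' leavesBelow T lvT x), N.Reach (N.hpt (μ c)) a := by
    intro c hxc
    obtain ⟨g, hg, hcg⟩ := hT.exists_leaf_reach c
    exact ⟨sp (σ g), ⟨σ g, ⟨g, ⟨hg, .head hxc hcg⟩, rfl⟩, rfl⟩,
      reach_hpt_of_reach_leaf hR1 hR3 hg hcg⟩
  obtain ⟨a₁, ha₁, hc₁a⟩ := hleaf c₁ hxc₁
  obtain ⟨a₂, ha₂, hc₂a⟩ := hleaf c₂ hxc₂
  have hup a ha := (vlt_of_mem_image_leavesBelow hac hR1 hR3 hx hs hw a ha).1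
  exact hh.isLca_of_mem_QSet hac hup ha₁ ha₂ (mem_QSet_of_reach hQ hc₁a hc₂a)

end Reconciliation

theorem relaxed_iff_treenet_general {V E W F S : Type}
    (T : MGraph V E) (lvT : Set V) (ρT : V) (t : V → Event) (σ : V → S)
    (hT : IsGeneTree T lvT ρT σ)
    (Sg : MGraph W F) (lvS : Set W) (ρS : W) (sp : S → W)
    (hS : IsPhyloTree Sg lvS ρS)
    (μ : V → W ⊕ F) :
    IsRelaxedRecon T lvT t σ Sg sp μ ↔ IsTreeNetRecon T lvT t σ Sg sp μ := by
  obtain ⟨hnet, -, hh⟩ := hS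
  have := hnet.finE
  constructor
  · intro h
    refine ⟨h.R1, fun x hx hs => ?_, h.R2ii, h.R3d, h.R3s⟩
    obtain ⟨w, hw, hl⟩ := h.R2istar x hx hs
    exact ⟨w, hw, exists_adj_mem_QSet_of_isLca hT hnet.acyclic hh h.R1 h.R3s hx hs hw hl⟩
  · intro h
    refine ⟨h.R1, fun x hx hs => ?_, h.R2ii, h.R3d, h.R3s⟩
    obtain ⟨w, hw, c₁, c₂, hxc₁, hxc₂, hQ⟩ := h.R2i x hx hs
    exact ⟨w, hw, isLca_of_adj_mem_QSet hT hnet.acyclic hh h.R1 h.R3s hx hs hw hxc₁ hxc₂ hQ⟩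

/-- For an event-labeled gene tree `(T;t,σ)`, a species tree `S` and
    a map `μ : V → W ∪ F`, `μ` is a relaxed tree reconciliation map from `(T;t,σ)`
    to `S` iff it is a TreeNet-reconciliation map from `(T;t,σ)` to `S`. -/
theorem relaxed_iff_treenet {V E W F S : Type}
    (T : MGraph V E) (lvT : Set V) (ρT : V) (t : V → Event) (σ : V → S)
    (hT : IsGeneTree T lvT ρT σ)
    (Sg : MGraph W F) (lvS : Set W) (ρS : W) (sp : S → W)
    (hS : IsPhyloTree Sg lvS ρS) (hsp : IsLeafLabeling Sg lvS sp)
    (μ : V → W ⊕ F) :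
    IsRelaxedRecon T lvT t σ Sg sp μ ↔ IsTreeNetRecon T lvT t σ Sg sp μ :=
  relaxed_iff_treenet_general T lvT ρT t σ hT Sg lvS ρS sp hS μ

end Phylo
end

section
/- Every MUL-tree (M,χ) on 𝕊 can be folded into a network on 𝕊; that is, there exist a network N on 𝕊 and a subdivision M' of M together with a folding map from (M',χ) to N. -/
namespace Phylo

variable {V E W F D U S : Type}

/-- `(M, lv, ρ, χ)` is a pseudo MUL-tree on the species set `S`:
    a rooted tree (possibly with indegree-1 outdegree-1 vertices) whose root has
    indegree 0 and outdegree 1, together with a labeling `χ` of the leaves by `S`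
    with pairwise disjoint nonempty classes covering all leaves. -/
structure IsPMULTree (M : MGraph D U) (lv : Set D) (ρ : D) (χ : S → Set D) : Prop where
  finD : Finite D
  finU : Finite U
  acyclic : M.Acyclic
  root_in : M.inDeg ρ = 0
  root_out : M.outDeg ρ = 1
  leaf_iff : ∀ v : D, v ∈ lv ↔ (M.outDeg v = 0 ∧ M.inDeg v = 1)
  inner_deg : ∀ v : D, v ∉ lv → v ≠ ρ → M.inDeg v = 1 ∧ 1 ≤ M.outDeg v
  chi_sub : ∀ x : S, χ x ⊆ lv
  chi_ne : ∀ x : S, (χ x).Nonempty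
  chi_disj : ∀ x y : S, x ≠ y → Disjoint (χ x) (χ y)
  chi_cover : ∀ l ∈ lv, ∃ x : S, l ∈ χ x
  species_nontriv : ∃ x y : S, x ≠ y

/-- A MUL-tree is a pseudo MUL-tree whose underlying tree is a phylogenetic tree,
    i.e., without indegree-1 outdegree-1 vertices. -/
def IsMULTree (M : MGraph D U) (lv : Set D) (ρ : D) (χ : S → Set D) : Prop :=
  IsPMULTree M lv ρ χ ∧ ∀ v : D, v ∉ lv → v ≠ ρ → 2 ≤ M.outDeg v

/-- `D¹`: the set of vertices with indegree one and outdegree one. -/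
def D1set (M : MGraph D U) : Set D := {v | M.inDeg v = 1 ∧ M.outDeg v = 1}

/-- A MUL-reconciliation map `κ : V → (D∖D¹) ∪ U` from the event-labeled gene tree
    `(T;t,σ)` to the pseudo MUL-tree `(M,χ)`:
    (M1) each leaf maps to a leaf of `M` labeled by its species;
    (M2.i) a speciation vertex maps to an inner vertex of `M` admitting directed
    paths to the images of two distinct children whose first arcs are incomparable;
    (M2.ii) a duplication vertex maps to an arc;
    (M3) ancestor relations are preserved (strictly, unless both are duplications). -/
structure IsMULRecon (T : MGraph V E) (lvT : Set V) (t : V → Event) (σ : V → S)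
    (M : MGraph D U) (lvM : Set D) (χ : S → Set D) (κ : V → D ⊕ U) : Prop where
  M0 : ∀ (x : V) (d : D), κ x = Sum.inl d → d ∉ D1set M
  M1 : ∀ x ∈ lvT, ∃ d : D, κ x = Sum.inl d ∧ d ∈ lvM ∧ d ∈ χ (σ x)
  M2i : ∀ x : V, x ∉ lvT → t x = Event.spec →
      ∃ d : D, κ x = Sum.inl d ∧ d ∉ lvM ∧
        ∃ c₁ c₂ : V, T.Adj x c₁ ∧ T.Adj x c₂ ∧ c₁ ≠ c₂ ∧
          ∃ a₁ a₂ : U, M.tail a₁ = d ∧ M.tail a₂ = d ∧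
            M.Reach (M.head a₁) (M.hpt (κ c₁)) ∧
            M.Reach (M.head a₂) (M.hpt (κ c₂)) ∧
            ¬ M.sle (Sum.inr a₁) (Sum.inr a₂) ∧ ¬ M.sle (Sum.inr a₂) (Sum.inr a₁)
  M2ii : ∀ x : V, x ∉ lvT → t x = Event.dupl → ∃ a : U, κ x = Sum.inr a
  M3d : ∀ x y : V, T.vlt x y → x ∉ lvT → y ∉ lvT →
      t x = Event.dupl → t y = Event.dupl → M.sle (κ x) (κ y)
  M3s : ∀ x y : V, T.vlt x y →
      ¬ (x ∉ lvT ∧ y ∉ lvT ∧ t x = Event.dupl ∧ t y = Event.dupl) →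
      M.slt (κ x) (κ y)

/-- A folding map `f = (fV, fE)` from a pseudo MUL-tree `(M,χ)` (with leaf set `lvM`)
    to the network `N` (with species labeling `sp`):
    (F1) `fV` and `fE` are compatible with tails and heads;
    (F2) each leaf of `M` is mapped to the species labeling it;
    (F3) each arc of `N` lifts uniquely at each preimage of its tail. -/
structure IsFoldingMap (M : MGraph D U) (lvM : Set D) (χ : S → Set D)
    (N : MGraph W F) (sp : S → W) (fV : D → W) (fE : U → F) : Prop where
  fV_surj : Function.Surjective fV
  fE_surj : Function.Surjective fE
  F1t : ∀ a : U, N.tail (fE a) = fV (M.tail a)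
  F1h : ∀ a : U, N.head (fE a) = fV (M.head a)
  F2 : ∀ v ∈ lvM, ∀ x : S, v ∈ χ x → fV v = sp x
  F3 : ∀ (a : F) (v : D), fV v = N.tail a → ∃! b : U, fE b = a ∧ M.tail b = v

/-- The internal vertices of a path given as a vertex list. -/
def internals (p : List V) : List V := (p.drop 1).dropLast

/-- `(M', lv', ρ', χ')` is a subdivision of the (pseudo) MUL-tree `(M, lv, ρ, χ)`:
    `M'` is obtained from `M` by replacing each arc by a directed path.
    The map `ι` embeds the vertices of `M` into `M'` and `P e` is the directed path
    of `M'` replacing the arc `e`; the internal vertices of these paths are new,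
    pairwise distinct, and together with the `ι`-images exhaust `M'`; every arc of
    `M'` lies on one of these paths. -/
def IsSubdivisionOf {D' U' : Type} (M' : MGraph D' U') (lv' : Set D') (ρ' : D')
    (χ' : S → Set D') (M : MGraph D U) (lv : Set D) (ρ : D) (χ : S → Set D) : Prop :=
  ∃ (ι : D → D') (P : U → List D'),
    Function.Injective ι ∧ ρ' = ι ρ ∧ lv' = ι '' lv ∧ (∀ x : S, χ' x = ι '' χ x) ∧
    (∀ e : U, M'.IsDiPath (P e) ∧ (P e).head? = some (ι (M.tail e)) ∧
        (P e).getLast? = some (ι (M.head e))) ∧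
    (∀ e : U, ∀ w ∈ internals (P e), ¬ ∃ d : D, ι d = w) ∧
    (∀ e f : U, e ≠ f → ∀ w : D', w ∈ internals (P e) → w ∉ internals (P f)) ∧
    (∀ w : D', (∃ d : D, ι d = w) ∨ ∃ e : U, w ∈ internals (P e)) ∧
    (∀ a : U', ∃ (e : U) (l₁ l₂ : List D'),
        P e = l₁ ++ M'.tail a :: M'.head a :: l₂)

/-!
Fold `M` onto the network obtained by keeping its inner vertices and arcs and identifying all
leaves with the same species. A species labelling several leaves would then give a leaf of
indegree at least two; instead, the pendant arc into each such leaf is subdivided once, and the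
new vertices of one species are folded onto a single hybrid vertex whose only child is the leaf
of that species. Inner vertices keep their degrees; the child of the root is not a leaf because
`M` has two leaves; and a cycle of the folded network can only run through inner vertices, so it
would be a cycle of `M`.
-/

namespace MGraph

lemma inDeg_eq_ncard (G : MGraph V E) (v : V) : G.inDeg v = {e | G.head e = v}.ncard :=
  Nat.card_coe_set_eq _

lemma outDeg_eq_ncard (G : MGraph V E) (v : V) : G.outDeg v = {e | G.tail e = v}.ncard :=
  Nat.card_coe_set_eq _

variable {G : MGraph V E}

lemma existsUnique_head_of_inDeg_eq_one {v : V} (h : G.inDeg v = 1) : ∃! e, G.head e = v := by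
  obtain ⟨e, he⟩ := Set.ncard_eq_one.mp (G.inDeg_eq_ncard v ▸ h)
  exact ⟨e, (Set.ext_iff.mp he e).mpr rfl, fun f hf => (Set.ext_iff.mp he f).mp hf⟩

lemma existsUnique_tail_of_outDeg_eq_one {v : V} (h : G.outDeg v = 1) : ∃! e, G.tail e = v := by
  obtain ⟨e, he⟩ := Set.ncard_eq_one.mp (G.outDeg_eq_ncard v ▸ h)
  exact ⟨e, (Set.ext_iff.mp he e).mpr rfl, fun f hf => (Set.ext_iff.mp he f).mp hf⟩

lemma reach_of_forall_exists_head [Finite V] (hG : G.Acyclic) {ρ : V}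
    (h : ∀ v ≠ ρ, ∃ e, G.head e = v) (v : V) : G.Reach ρ v := by
  have : IsTrans V (Relation.TransGen G.Adj) := ⟨fun _ _ _ => Relation.TransGen.trans⟩
  have : Std.Irrefl (Relation.TransGen G.Adj) := ⟨hG⟩
  induction v using (Finite.wellFounded_of_trans_of_irrefl (Relation.TransGen G.Adj)).induction
    with | _ v ih
  by_cases hv : v = ρ
  · exact hv ▸ Relation.ReflTransGen.refl
  · obtain ⟨e, he⟩ := h v hv
    exact (ih _ (.single ⟨e, rfl, he⟩)).tail ⟨e, rfl, he⟩

lemma eq_of_reach_of_forall_tail_ne {u v : V} (hu : ∀ e, G.tail e ≠ u) (h : G.Reach u v) :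
    v = u := by
  rcases h.cases_head with h | ⟨_, ⟨e, he, -⟩, -⟩
  · exact h.symm
  · exact absurd he (hu e)

end MGraph

lemma isLeafLabeling_range (G : MGraph V E) {sp : S → V} (hsp : Function.Injective sp) :
    IsLeafLabeling G (Set.range sp) sp :=
  ⟨hsp, Set.mem_range_self, fun _ ⟨s, hs⟩ => ⟨s, hs⟩⟩

namespace IsPMULTree

variable {M : MGraph D U} {lv : Set D} {ρ : D} {χ : S → Set D}

lemma tail_notMem (hM : IsPMULTree M lv ρ χ) (e : U) : M.tail e ∉ lv := fun h =>
  have := hM.finU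
  (Nat.card_pos_iff.mpr ⟨⟨⟨e, rfl⟩⟩, inferInstance⟩).ne' ((hM.leaf_iff _).mp h).1

lemma head_ne_root (hM : IsPMULTree M lv ρ χ) (e : U) : M.head e ≠ ρ := fun h =>
  have := hM.finU
  (Nat.card_pos_iff.mpr ⟨⟨⟨e, h⟩⟩, inferInstance⟩).ne' hM.root_in

lemma head_ne_tail (hM : IsPMULTree M lv ρ χ) (e : U) : M.head e ≠ M.tail e := fun h =>
  hM.acyclic _ (.single ⟨e, rfl, h⟩)

lemma root_notMem (hM : IsPMULTree M lv ρ χ) : ρ ∉ lv := fun h => by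
  simpa [hM.root_in] using ((hM.leaf_iff ρ).mp h).2

lemma existsUnique_head (hM : IsPMULTree M lv ρ χ) {v : D} (hv : v ≠ ρ) :
    ∃! e, M.head e = v := by
  refine MGraph.existsUnique_head_of_inDeg_eq_one ?_
  by_cases h : v ∈ lv
  · exact ((hM.leaf_iff v).mp h).2
  · exact (hM.inner_deg v h hv).1

lemma existsUnique_head_of_mem (hM : IsPMULTree M lv ρ χ) {d : D} (hd : d ∈ lv) :
    ∃! e, M.head e = d :=
  hM.existsUnique_head fun h => hM.root_notMem (h ▸ hd)

lemma reach_root (hM : IsPMULTree M lv ρ χ) (v : D) : M.Reach ρ v :=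
  have := hM.finD
  MGraph.reach_of_forall_exists_head hM.acyclic (fun _ hv => (hM.existsUnique_head hv).exists) v

lemma exists_ne_mem (hM : IsPMULTree M lv ρ χ) : ∃ a ∈ lv, ∃ b ∈ lv, a ≠ b := by
  obtain ⟨x, y, hxy⟩ := hM.species_nontriv
  obtain ⟨a, ha⟩ := hM.chi_ne x
  obtain ⟨b, hb⟩ := hM.chi_ne y
  exact ⟨a, hM.chi_sub x ha, b, hM.chi_sub y hb, (hM.chi_disj x y hxy).ne_of_mem ha hb⟩

lemma head_notMem_of_tail_eq_root (hM : IsPMULTree M lv ρ χ) {e : U} (he : M.tail e = ρ) :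
    M.head e ∉ lv := by
  intro hc
  obtain ⟨e₀, -, he₀⟩ := MGraph.existsUnique_tail_of_outDeg_eq_one hM.root_out
  -- every leaf lies below the only child of the root, which is itself a leaf
  have hall : ∀ l ∈ lv, l = M.head e := by
    intro l hl
    rcases (hM.reach_root l).cases_head with h | ⟨_, ⟨f, hf, rfl⟩, hfl⟩
    · exact absurd (h ▸ hl) hM.root_notMem
    · rw [he₀ f hf, ← he₀ e he] at hfl
      exact MGraph.eq_of_reach_of_forall_tail_ne (fun f hf => hM.tail_notMem f (hf ▸ hc)) hfl
  obtain ⟨a, ha, b, hb, hab⟩ := hM.exists_ne_mem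
  exact hab ((hall a ha).trans (hall b hb).symm)

lemma finite_species (hM : IsPMULTree M lv ρ χ) : Finite S :=
  have := hM.finD
  Finite.of_injective (fun s => (hM.chi_ne s).some) fun s t hst => by
    by_contra hne
    exact (hM.chi_disj s t hne).ne_of_mem (hM.chi_ne s).some_mem (hM.chi_ne t).some_mem hst

end IsPMULTree

lemma IsMULTree.inner_deg {M : MGraph D U} {lv : Set D} {ρ : D} {χ : S → Set D}
    (hM : IsMULTree M lv ρ χ) {d : D} (hd : d ∉ lv) (hρ : d ≠ ρ) :
    M.inDeg d = 1 ∧ 2 ≤ M.outDeg d :=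
  ⟨(hM.1.inner_deg d hd hρ).1, hM.2 d hd hρ⟩

/-- The species of a leaf; junk (an arbitrary species) on vertices that are not leaves. -/
noncomputable def leafSpecies [Nonempty S] (χ : S → Set D) (d : D) : S :=
  Classical.epsilon (d ∈ χ ·)

lemma leafSpecies_eq [Nonempty S] {χ : S → Set D}
    (hχ : ∀ x y, x ≠ y → Disjoint (χ x) (χ y)) {d : D} {s : S} (hd : d ∈ χ s) :
    leafSpecies χ d = s := by
  by_contra h
  exact (hχ _ _ h).ne_of_mem (Classical.epsilon_spec (p := (d ∈ χ ·)) ⟨s, hd⟩) hd rfl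

lemma mem_leafSpecies [Nonempty S] {χ : S → Set D} {d : D} (h : ∃ s, d ∈ χ s) :
    d ∈ χ (leafSpecies χ d) :=
  Classical.epsilon_spec h

inductive FoldedVertex (lv : Set D) (χ : S → Set D) : Type
  | inner : {d // d ∉ lv} → FoldedVertex lv χ
  | leaf : S → FoldedVertex lv χ
  | hybrid : {s // (χ s).Nontrivial} → FoldedVertex lv χ

instance [Finite D] [Finite S] (lv : Set D) (χ : S → Set D) : Finite (FoldedVertex lv χ) :=
  Finite.of_surjective (Sum.elim .inner (Sum.elim .leaf .hybrid)) <| by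
    rintro (d | s | s)
    exacts [⟨.inl d, rfl⟩, ⟨.inr (.inl s), rfl⟩, ⟨.inr (.inr s), rfl⟩]

section Folding

variable [Nonempty S]

/-- The pendant arc into such a leaf is subdivided, and the new vertex is folded onto the
hybrid vertex of its species. -/
def IsRepeatedLeaf (lv : Set D) (χ : S → Set D) (d : D) : Prop :=
  d ∈ lv ∧ (χ (leafSpecies χ d)).Nontrivial

lemma not_isRepeatedLeaf_of_notMem {lv : Set D} {χ : S → Set D} {d : D} (h : d ∉ lv) :
    ¬ IsRepeatedLeaf lv χ d := fun hd => h hd.1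

open Classical in
noncomputable def pendantSubdivision (M : MGraph D U) (lv : Set D) (χ : S → Set D) :
    MGraph (D ⊕ {d // IsRepeatedLeaf lv χ d}) (U ⊕ {d // IsRepeatedLeaf lv χ d}) where
  tail := Sum.elim (Sum.inl ∘ M.tail) Sum.inr
  head := Sum.elim
    (fun e => if h : IsRepeatedLeaf lv χ (M.head e) then .inr ⟨_, h⟩ else .inl (M.head e))
    (Sum.inl ∘ Subtype.val)

open Classical in
noncomputable def pendantPath (M : MGraph D U) (lv : Set D) (χ : S → Set D) (e : U) :
    List (D ⊕ {d // IsRepeatedLeaf lv χ d}) :=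
  if h : IsRepeatedLeaf lv χ (M.head e) then [.inl (M.tail e), .inr ⟨_, h⟩, .inl (M.head e)]
  else [.inl (M.tail e), .inl (M.head e)]

open Classical in
noncomputable def foldVertex (lv : Set D) (χ : S → Set D) :
    D ⊕ {d // IsRepeatedLeaf lv χ d} → FoldedVertex lv χ
  | .inl d => if h : d ∈ lv then .leaf (leafSpecies χ d) else .inner ⟨d, h⟩
  | .inr d => .hybrid ⟨leafSpecies χ d, d.2.2⟩

noncomputable def foldArc (lv : Set D) (χ : S → Set D) :
    U ⊕ {d // IsRepeatedLeaf lv χ d} → U ⊕ {s // (χ s).Nontrivial} :=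
  Sum.map id fun d => ⟨leafSpecies χ d, d.2.2⟩

/-- The arcs of `M` are drawn through `foldVertex`, a pendant arc into a repeated leaf ending at
the hybrid vertex of its species; each hybrid vertex has one further arc, to its leaf. -/
noncomputable def foldedNetwork (M : MGraph D U) (lv : Set D) (χ : S → Set D) :
    MGraph (FoldedVertex lv χ) (U ⊕ {s // (χ s).Nontrivial}) where
  tail
    | .inl e => foldVertex lv χ (.inl (M.tail e))
    | .inr s => .hybrid s
  head
    | .inl e => foldVertex lv χ ((pendantSubdivision M lv χ).head (.inl e))
    | .inr s => .leaf s

variable {M : MGraph D U} {lv : Set D} {ρ : D} {χ : S → Set D}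

@[simp] lemma pendantSubdivision_tail_inl (e : U) :
    (pendantSubdivision M lv χ).tail (.inl e) = .inl (M.tail e) := rfl

@[simp] lemma pendantSubdivision_tail_inr (d : {d // IsRepeatedLeaf lv χ d}) :
    (pendantSubdivision M lv χ).tail (.inr d) = .inr d := rfl

lemma pendantSubdivision_head_inl_of_isRepeatedLeaf {e : U}
    (h : IsRepeatedLeaf lv χ (M.head e)) :
    (pendantSubdivision M lv χ).head (.inl e) = .inr ⟨_, h⟩ := by
  simp [pendantSubdivision, h]

lemma pendantSubdivision_head_inl_of_not_isRepeatedLeaf {e : U}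
    (h : ¬ IsRepeatedLeaf lv χ (M.head e)) :
    (pendantSubdivision M lv χ).head (.inl e) = .inl (M.head e) := by
  simp [pendantSubdivision, h]

lemma pendantSubdivision_head_inl_eq_inl_iff {e : U} {d : D} :
    (pendantSubdivision M lv χ).head (.inl e) = .inl d ↔
      M.head e = d ∧ ¬ IsRepeatedLeaf lv χ d := by
  by_cases h : IsRepeatedLeaf lv χ (M.head e)
  · simpa [pendantSubdivision_head_inl_of_isRepeatedLeaf h] using fun he => he ▸ h
  · rw [pendantSubdivision_head_inl_of_not_isRepeatedLeaf h, Sum.inl.injEq]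
    exact ⟨fun he => ⟨he, he ▸ h⟩, And.left⟩

@[simp] lemma foldedNetwork_tail_inl (e : U) :
    (foldedNetwork M lv χ).tail (.inl e) = foldVertex lv χ (.inl (M.tail e)) := rfl

@[simp] lemma foldedNetwork_tail_inr (s : {s // (χ s).Nontrivial}) :
    (foldedNetwork M lv χ).tail (.inr s) = .hybrid s := rfl

lemma foldedNetwork_head_inl (e : U) :
    (foldedNetwork M lv χ).head (.inl e) =
      foldVertex lv χ ((pendantSubdivision M lv χ).head (.inl e)) := rfl

@[simp] lemma foldedNetwork_head_inr (s : {s // (χ s).Nontrivial}) :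
    (foldedNetwork M lv χ).head (.inr s) = .leaf s := rfl

lemma foldVertex_inl_of_notMem {d : D} (h : d ∉ lv) :
    foldVertex lv χ (.inl d) = .inner ⟨d, h⟩ := by
  simp [foldVertex, h]

lemma foldVertex_inl_of_mem {d : D} (h : d ∈ lv) :
    foldVertex lv χ (.inl d) = .leaf (leafSpecies χ d) := by
  simp [foldVertex, h]

lemma foldVertex_eq_inner_iff {v : D ⊕ {d // IsRepeatedLeaf lv χ d}} {d : {d // d ∉ lv}} :
    foldVertex lv χ v = .inner d ↔ v = .inl d.1 := by
  rcases v with v | v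
  · by_cases h : v ∈ lv
    · simpa [foldVertex, h] using fun hv : v = d.1 => d.2 (hv ▸ h)
    · simp [foldVertex, h, Subtype.ext_iff]
  · simp [foldVertex]

lemma foldVertex_eq_leaf_iff {v : D ⊕ {d // IsRepeatedLeaf lv χ d}} {s : S} :
    foldVertex lv χ v = .leaf s ↔ ∃ d ∈ lv, v = .inl d ∧ leafSpecies χ d = s := by
  rcases v with v | v
  · by_cases h : v ∈ lv <;> simp [foldVertex, h]
  · simp [foldVertex]

lemma foldVertex_eq_hybrid_iff {v : D ⊕ {d // IsRepeatedLeaf lv χ d}}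
    {s : {s // (χ s).Nontrivial}} :
    foldVertex lv χ v = .hybrid s ↔ ∃ d, v = .inr d ∧ leafSpecies χ d.1 = s.1 := by
  rcases v with v | v
  · by_cases h : v ∈ lv <;> simp [foldVertex, h]
  · simp [foldVertex, Subtype.ext_iff, v.2]

lemma IsPMULTree.isRepeatedLeaf_of_mem (hM : IsPMULTree M lv ρ χ) {s : S}
    (hs : (χ s).Nontrivial) {d : D} (hd : d ∈ χ s) : IsRepeatedLeaf lv χ d :=
  ⟨hM.chi_sub s hd, leafSpecies_eq hM.chi_disj hd ▸ hs⟩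

lemma foldedNetwork_tail_eq_inner_iff {a : U ⊕ {s // (χ s).Nontrivial}} {d : {d // d ∉ lv}} :
    (foldedNetwork M lv χ).tail a = .inner d ↔ ∃ e, a = .inl e ∧ M.tail e = d.1 := by
  rcases a with e | s <;> simp [foldVertex_eq_inner_iff]

lemma IsPMULTree.foldedNetwork_tail_ne_leaf (hM : IsPMULTree M lv ρ χ)
    (a : U ⊕ {s // (χ s).Nontrivial}) (s : S) : (foldedNetwork M lv χ).tail a ≠ .leaf s := by
  rcases a with e | t <;> simp [foldVertex_eq_leaf_iff, hM.tail_notMem]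

lemma foldedNetwork_head_of_tail_eq_hybrid {a : U ⊕ {s // (χ s).Nontrivial}}
    {s : {s // (χ s).Nontrivial}} (h : (foldedNetwork M lv χ).tail a = .hybrid s) :
    (foldedNetwork M lv χ).head a = .leaf s.1 := by
  rcases a with e | t
  · simp [foldVertex_eq_hybrid_iff] at h
  · cases h; rfl

lemma foldedNetwork_head_inl_eq_inner_iff {e : U} {d : {d // d ∉ lv}} :
    (foldedNetwork M lv χ).head (.inl e) = .inner d ↔ M.head e = d.1 := by
  simp [foldedNetwork_head_inl, foldVertex_eq_inner_iff, pendantSubdivision_head_inl_eq_inl_iff,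
    not_isRepeatedLeaf_of_notMem d.2]

lemma IsPMULTree.foldedNetwork_head_inl_eq_leaf_iff (hM : IsPMULTree M lv ρ χ) {e : U}
    {s : S} :
    (foldedNetwork M lv χ).head (.inl e) = .leaf s ↔ M.head e ∈ χ s ∧ ¬ (χ s).Nontrivial := by
  simp only [foldedNetwork_head_inl, foldVertex_eq_leaf_iff,
    pendantSubdivision_head_inl_eq_inl_iff, existsAndEq, true_and]
  constructor
  · rintro ⟨hl, hrep, rfl⟩
    exact ⟨mem_leafSpecies (hM.chi_cover _ hl), fun hs => hrep ⟨hl, hs⟩⟩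
  · rintro ⟨hd, hs⟩
    have hσ := leafSpecies_eq hM.chi_disj hd
    exact ⟨hM.chi_sub s hd, fun h => hs (hσ ▸ h.2), hσ⟩

lemma IsPMULTree.foldedNetwork_head_inl_eq_hybrid (hM : IsPMULTree M lv ρ χ) {e : U}
    {s : {s // (χ s).Nontrivial}} (he : M.head e ∈ χ s) :
    (foldedNetwork M lv χ).head (.inl e) = .hybrid s := by
  rw [foldedNetwork_head_inl,
    pendantSubdivision_head_inl_of_isRepeatedLeaf (hM.isRepeatedLeaf_of_mem s.2 he)]
  exact foldVertex_eq_hybrid_iff.mpr ⟨_, rfl, leafSpecies_eq hM.chi_disj he⟩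

lemma foldedNetwork_outDeg_inner (d : {d // d ∉ lv}) :
    (foldedNetwork M lv χ).outDeg (.inner d) = M.outDeg d.1 := by
  rw [MGraph.outDeg_eq_ncard, MGraph.outDeg_eq_ncard,
    ← Set.ncard_image_of_injective {e | M.tail e = d.1} Sum.inl_injective]
  refine congrArg Set.ncard (Set.ext ?_)
  rintro (e | s) <;> simp [foldVertex_eq_inner_iff]

lemma foldedNetwork_inDeg_inner (d : {d // d ∉ lv}) :
    (foldedNetwork M lv χ).inDeg (.inner d) = M.inDeg d.1 := by
  rw [MGraph.inDeg_eq_ncard, MGraph.inDeg_eq_ncard,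
    ← Set.ncard_image_of_injective {e | M.head e = d.1} Sum.inl_injective]
  refine congrArg Set.ncard (Set.ext ?_)
  rintro (e | s) <;> simp [foldedNetwork_head_inl_eq_inner_iff]

lemma foldedNetwork_outDeg_hybrid (s : {s // (χ s).Nontrivial}) :
    (foldedNetwork M lv χ).outDeg (.hybrid s) = 1 := by
  rw [MGraph.outDeg_eq_ncard, Set.ncard_eq_one]
  refine ⟨.inr s, Set.ext ?_⟩
  rintro (e | t) <;> simp [foldVertex_eq_hybrid_iff]

lemma IsPMULTree.foldedNetwork_outDeg_leaf (hM : IsPMULTree M lv ρ χ) (s : S) :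
    (foldedNetwork M lv χ).outDeg (.leaf s) = 0 := by
  have : {a | (foldedNetwork M lv χ).tail a = .leaf s} = ∅ :=
    Set.eq_empty_of_forall_notMem fun a => hM.foldedNetwork_tail_ne_leaf a s
  rw [MGraph.outDeg_eq_ncard, this, Set.ncard_empty]

lemma IsPMULTree.foldedNetwork_inDeg_leaf (hM : IsPMULTree M lv ρ χ) (s : S) :
    (foldedNetwork M lv χ).inDeg (.leaf s) = 1 := by
  rw [MGraph.inDeg_eq_ncard, Set.ncard_eq_one]
  by_cases hs : (χ s).Nontrivial
  · refine ⟨.inr ⟨s, hs⟩, Set.ext ?_⟩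
    rintro (e | t)
    · simpa [hM.foldedNetwork_head_inl_eq_leaf_iff] using fun _ => hs
    · simp [Subtype.ext_iff]
  · obtain ⟨d, hd⟩ := hM.chi_ne s
    have hχs : χ s = {d} := (Set.not_nontrivial_iff.mp hs).eq_singleton_of_mem hd
    obtain ⟨e, he, huniq⟩ := hM.existsUnique_head_of_mem (hM.chi_sub s hd)
    refine ⟨.inl e, Set.ext ?_⟩
    rintro (f | t)
    · simpa [hM.foldedNetwork_head_inl_eq_leaf_iff, hχs, hs] using
        ⟨huniq f, fun h : f = e => h ▸ he⟩
    · simpa using fun h : t.1 = s => hs (h ▸ t.2)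

lemma IsPMULTree.foldedNetwork_two_le_inDeg_hybrid (hM : IsPMULTree M lv ρ χ)
    (s : {s // (χ s).Nontrivial}) : 2 ≤ (foldedNetwork M lv χ).inDeg (.hybrid s) := by
  have := hM.finU
  have := hM.finite_species
  obtain ⟨d₁, hd₁, d₂, hd₂, hne⟩ := s.2
  obtain ⟨e₁, he₁, -⟩ := hM.existsUnique_head_of_mem (hM.chi_sub s hd₁)
  obtain ⟨e₂, he₂, -⟩ := hM.existsUnique_head_of_mem (hM.chi_sub s hd₂)
  rw [MGraph.inDeg_eq_ncard, Nat.succ_le_iff, Set.one_lt_ncard_iff]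
  exact ⟨.inl e₁, .inl e₂, hM.foldedNetwork_head_inl_eq_hybrid (he₁ ▸ hd₁),
    hM.foldedNetwork_head_inl_eq_hybrid (he₂ ▸ hd₂),
    fun h => hne (he₁ ▸ he₂ ▸ congrArg M.head (Sum.inl_injective h))⟩

lemma IsPMULTree.foldedNetwork_adj_inner (hM : IsPMULTree M lv ρ χ) {w : FoldedVertex lv χ}
    {d : {d // d ∉ lv}} (h : (foldedNetwork M lv χ).Adj w (.inner d)) :
    ∃ c : {d // d ∉ lv}, w = .inner c ∧ M.Adj c.1 d.1 := by
  obtain ⟨e | s, rfl, hh⟩ := h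
  · exact ⟨⟨M.tail e, hM.tail_notMem e⟩, foldVertex_inl_of_notMem _, e, rfl,
      foldedNetwork_head_inl_eq_inner_iff.mp hh⟩
  · cases hh

lemma IsPMULTree.foldedNetwork_transGen_inner (hM : IsPMULTree M lv ρ χ)
    {w : FoldedVertex lv χ} {d : {d // d ∉ lv}}
    (h : Relation.TransGen (foldedNetwork M lv χ).Adj w (.inner d)) :
    ∃ c : {d // d ∉ lv}, w = .inner c ∧ Relation.TransGen M.Adj c.1 d.1 := by
  induction h using Relation.TransGen.head_induction_on with
  | single h =>
    obtain ⟨c, rfl, hc⟩ := hM.foldedNetwork_adj_inner h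
    exact ⟨c, rfl, .single hc⟩
  | head h _ ih =>
    obtain ⟨c, rfl, hc⟩ := ih
    obtain ⟨b, rfl, hb⟩ := hM.foldedNetwork_adj_inner h
    exact ⟨b, rfl, .head hb hc⟩

lemma IsPMULTree.foldedNetwork_acyclic (hM : IsPMULTree M lv ρ χ) :
    (foldedNetwork M lv χ).Acyclic := by
  rintro (d | s | s) hw
  · obtain ⟨c, hc, hcycle⟩ := hM.foldedNetwork_transGen_inner hw
    cases hc
    exact hM.acyclic _ hcycle
  · obtain ⟨_, ⟨a, ha, -⟩, -⟩ := Relation.TransGen.head'_iff.mp hw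
    exact hM.foldedNetwork_tail_ne_leaf a s ha
  · obtain ⟨_, ⟨a, ha, rfl⟩, hback⟩ := Relation.TransGen.head'_iff.mp hw
    rw [foldedNetwork_head_of_tail_eq_hybrid ha] at hback
    nomatch MGraph.eq_of_reach_of_forall_tail_ne (hM.foldedNetwork_tail_ne_leaf · _) hback

lemma IsMULTree.foldedNetwork_isNetwork (hM : IsMULTree M lv ρ χ) :
    IsNetwork (foldedNetwork M lv χ) (Set.range .leaf) (.inner ⟨ρ, hM.1.root_notMem⟩) where
  finV := have := hM.1.finD; have := hM.1.finite_species; inferInstance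
  finE := have := hM.1.finU; have := hM.1.finite_species; inferInstance
  acyclic := hM.1.foldedNetwork_acyclic
  root_in := by rw [foldedNetwork_inDeg_inner]; exact hM.1.root_in
  root_out := by rw [foldedNetwork_outDeg_inner]; exact hM.1.root_out
  root_child := by
    rintro _ ⟨a, ha, rfl⟩
    obtain ⟨e, rfl, hρ⟩ := foldedNetwork_tail_eq_inner_iff.mp ha
    have hc := hM.1.head_notMem_of_tail_eq_root hρ
    rw [foldedNetwork_head_inl_eq_inner_iff (d := ⟨_, hc⟩) |>.mpr rfl,
      foldedNetwork_inDeg_inner, foldedNetwork_outDeg_inner]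
    exact hM.inner_deg hc (hM.1.head_ne_root e)
  leaf_iff := by
    rintro (d | s | s)
    · refine iff_of_false (by simp) fun h => ?_
      rw [foldedNetwork_outDeg_inner] at h
      by_cases hρ : d.1 = ρ
      · simp [hρ, hM.1.root_out] at h
      · simpa [h.1] using (hM.inner_deg d.2 hρ).2
    · exact iff_of_true ⟨s, rfl⟩
        ⟨hM.1.foldedNetwork_outDeg_leaf s, hM.1.foldedNetwork_inDeg_leaf s⟩
    · exact iff_of_false (by simp) (by simp [foldedNetwork_outDeg_hybrid])
  inner_deg := by
    rintro (d | s | s) hleaf hroot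
    · rw [foldedNetwork_inDeg_inner, foldedNetwork_outDeg_inner]
      exact .inl (hM.inner_deg d.2 fun h => hroot (congrArg _ (Subtype.ext h)))
    · exact absurd ⟨s, rfl⟩ hleaf
    · exact .inr ⟨hM.1.foldedNetwork_two_le_inDeg_hybrid s, foldedNetwork_outDeg_hybrid s⟩
  two_leaves := by
    obtain ⟨x, y, hxy⟩ := hM.1.species_nontriv
    exact ⟨.leaf x, .leaf y, ⟨x, rfl⟩, ⟨y, rfl⟩, by simpa using hxy⟩

lemma isDiPath_pendantPath {e : U} (hne : M.head e ≠ M.tail e) :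
    (pendantSubdivision M lv χ).IsDiPath (pendantPath M lv χ e) := by
  have hadj : (pendantSubdivision M lv χ).Adj (.inl (M.tail e))
      ((pendantSubdivision M lv χ).head (.inl e)) := ⟨.inl e, rfl, rfl⟩
  by_cases h : IsRepeatedLeaf lv χ (M.head e)
  · rw [pendantSubdivision_head_inl_of_isRepeatedLeaf h] at hadj
    rw [pendantPath, dif_pos h]
    exact ⟨List.cons_ne_nil _ _,
      .cons_cons hadj (.cons_cons ⟨.inr ⟨_, h⟩, rfl, rfl⟩ (.singleton _)), by simp [hne.symm]⟩
  · rw [pendantSubdivision_head_inl_of_not_isRepeatedLeaf h] at hadj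
    rw [pendantPath, dif_neg h]
    exact ⟨List.cons_ne_nil _ _, .cons_cons hadj (.singleton _), by simp [hne.symm]⟩

lemma mem_internals_pendantPath {e : U} {w : D ⊕ {d // IsRepeatedLeaf lv χ d}} :
    w ∈ internals (pendantPath M lv χ e) ↔
      ∃ h : IsRepeatedLeaf lv χ (M.head e), w = .inr ⟨_, h⟩ := by
  by_cases h : IsRepeatedLeaf lv χ (M.head e) <;> simp [pendantPath, internals, h]

lemma IsPMULTree.exists_pendantPath_eq_append (hM : IsPMULTree M lv ρ χ)
    (a : U ⊕ {d // IsRepeatedLeaf lv χ d}) :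
    ∃ (e : U) (l₁ l₂ : List (D ⊕ {d // IsRepeatedLeaf lv χ d})),
      pendantPath M lv χ e = l₁ ++ (pendantSubdivision M lv χ).tail a ::
        (pendantSubdivision M lv χ).head a :: l₂ := by
  rcases a with e | ⟨d, hd⟩
  · by_cases h : IsRepeatedLeaf lv χ (M.head e)
    · refine ⟨e, [], [.inl (M.head e)], ?_⟩
      rw [pendantSubdivision_head_inl_of_isRepeatedLeaf h, pendantPath, dif_pos h]
      rfl
    · refine ⟨e, [], [], ?_⟩
      rw [pendantSubdivision_head_inl_of_not_isRepeatedLeaf h, pendantPath, dif_neg h]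
      rfl
  · obtain ⟨e, rfl, -⟩ := hM.existsUnique_head_of_mem hd.1
    refine ⟨e, [.inl (M.tail e)], [], ?_⟩
    rw [pendantPath, dif_pos hd]
    rfl

lemma IsPMULTree.isSubdivisionOf_pendantSubdivision (hM : IsPMULTree M lv ρ χ) :
    IsSubdivisionOf (pendantSubdivision M lv χ) (Sum.inl '' lv) (.inl ρ)
      (fun x => Sum.inl '' χ x) M lv ρ χ := by
  refine ⟨Sum.inl, pendantPath M lv χ, Sum.inl_injective, rfl, rfl, fun _ => rfl,
    fun e => ⟨isDiPath_pendantPath (hM.head_ne_tail e), ?_, ?_⟩, ?_, ?_, ?_,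
    hM.exists_pendantPath_eq_append⟩
  · unfold pendantPath; split_ifs <;> rfl
  · unfold pendantPath; split_ifs <;> rfl
  · intro e w hw
    obtain ⟨h, rfl⟩ := mem_internals_pendantPath.mp hw
    rintro ⟨d, ⟨⟩⟩
  · intro e f hef w hwe hwf
    obtain ⟨he, rfl⟩ := mem_internals_pendantPath.mp hwe
    obtain ⟨hf, hw⟩ := mem_internals_pendantPath.mp hwf
    simp only [Sum.inr.injEq, Subtype.mk.injEq] at hw
    exact hef ((hM.existsUnique_head (hM.head_ne_root f)).unique hw rfl)
  · rintro (d | d)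
    · exact .inl ⟨d, rfl⟩
    · obtain ⟨e, he, -⟩ := hM.existsUnique_head_of_mem d.2.1
      exact .inr ⟨e, mem_internals_pendantPath.mpr
        ⟨he ▸ d.2, congrArg Sum.inr (Subtype.ext he.symm)⟩⟩

lemma IsPMULTree.isFoldingMap (hM : IsPMULTree M lv ρ χ) :
    IsFoldingMap (pendantSubdivision M lv χ) (Sum.inl '' lv) (fun x => Sum.inl '' χ x)
      (foldedNetwork M lv χ) FoldedVertex.leaf (foldVertex lv χ) (foldArc lv χ) where
  fV_surj := by
    rintro (d | s | s)
    · exact ⟨.inl d, foldVertex_inl_of_notMem d.2⟩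
    · obtain ⟨d, hd⟩ := hM.chi_ne s
      exact ⟨.inl d, foldVertex_eq_leaf_iff.mpr
        ⟨d, hM.chi_sub s hd, rfl, leafSpecies_eq hM.chi_disj hd⟩⟩
    · obtain ⟨d, hd⟩ := s.2.nonempty
      exact ⟨.inr ⟨d, hM.isRepeatedLeaf_of_mem s.2 hd⟩,
        foldVertex_eq_hybrid_iff.mpr ⟨_, rfl, leafSpecies_eq hM.chi_disj hd⟩⟩
  fE_surj := by
    rintro (e | s)
    · exact ⟨.inl e, rfl⟩
    · obtain ⟨d, hd⟩ := s.2.nonempty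
      exact ⟨.inr ⟨d, hM.isRepeatedLeaf_of_mem s.2 hd⟩,
        by simp [foldArc, leafSpecies_eq hM.chi_disj hd]⟩
  F1t := by rintro (e | d) <;> rfl
  F1h := by
    rintro (e | d)
    · rfl
    · exact (foldVertex_inl_of_mem d.2.1).symm
  F2 := by
    rintro _ ⟨d, hd, rfl⟩ x ⟨d', hd', h⟩
    cases h
    exact foldVertex_eq_leaf_iff.mpr ⟨d, hd, rfl, leafSpecies_eq hM.chi_disj hd'⟩
  F3 := by
    rintro (e | s) v hv
    · rw [foldedNetwork_tail_inl, foldVertex_inl_of_notMem (hM.tail_notMem e),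
        foldVertex_eq_inner_iff] at hv
      subst hv
      refine ⟨.inl e, ⟨rfl, rfl⟩, ?_⟩
      rintro (f | d) ⟨hf, -⟩
      · simpa [foldArc] using hf
      · simp [foldArc] at hf
    · rw [foldedNetwork_tail_inr, foldVertex_eq_hybrid_iff] at hv
      obtain ⟨d, rfl, hd⟩ := hv
      refine ⟨.inr d, ⟨by simp [foldArc, hd], rfl⟩, ?_⟩
      rintro (f | d') ⟨-, hf⟩
      · simp at hf
      · simpa using hf

end Folding

/-- Every MUL-tree `(M,χ)` on `𝕊` can be folded into a network on
    `𝕊`: there exist a network `N` on `𝕊` and a subdivision `M'` of `M` together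
    with a folding map from `(M',χ)` to `N`. -/
theorem mul_tree_foldable {D U S : Type}
    (M : MGraph D U) (lvM : Set D) (ρM : D) (χ : S → Set D)
    (hM : IsMULTree M lvM ρM χ) :
    ∃ (W F : Type) (N : MGraph W F) (lvN : Set W) (ρN : W) (spN : S → W),
      IsNetwork N lvN ρN ∧ IsLeafLabeling N lvN spN ∧
      ∃ (D' U' : Type) (M' : MGraph D' U') (lvM' : Set D') (ρM' : D')
        (χ' : S → Set D'),
        IsSubdivisionOf M' lvM' ρM' χ' M lvM ρM χ ∧
        ∃ (fV : D' → W) (fE : U' → F), IsFoldingMap M' lvM' χ' N spN fV fE := by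
  obtain ⟨x, -⟩ := hM.1.species_nontriv
  have : Nonempty S := ⟨x⟩
  exact ⟨_, _, foldedNetwork M lvM χ, _, _, _, hM.foldedNetwork_isNetwork,
    isLeafLabeling_range _ fun _ _ => FoldedVertex.leaf.inj, _, _, _, _, _, _,
    hM.1.isSubdivisionOf_pendantSubdivision, _, _, hM.1.isFoldingMap⟩

end Phylo
end
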